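/- Let $P(z) = c\prod_{j=1}^n(z-z_j)$ be a degree-$n$ polynomial with all zeros in $|z| \le 1$, and let $\gamma = (\gamma_1,\dots,\gamma_n)$ be nonnegative reals, not all zero, with sum $\Lambda$ and minimum $\gamma_m$. Define $P^\gamma(z) = c\sum_{j=1}^n \gamma_j\prod_{i\ne j}(z-z_i)$ and the generalized polar derivative $D_\alpha^\gamma[P](z) = \Lambda P(z) + (\alpha - z)P^\gamma(z)$. Then for every $\alpha \in \mathbb{C}$ with $|\alpha| \ge 1$, $\max_{|z|=1} |D_\alpha^\gamma[P](z)| \ge \frac{|\alpha|-1}{2}\left(\Lambda + \gamma_m\cdot\frac{|a_n|-|a_0|}{|a_n|+|a_0|}\right)\max_{|z|=1}|P(z)|$, where $a_n$ and $a_0$ are the leading coefficient and constant term of $P$. -/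

import Mathlib

/-!
Fix `w` on the unit circle with `P w ≠ 0` and put `Q = P^γ(w) / P(w) = ∑ γⱼ / (w - zⱼ)`, so that
`D(w) = P(w) (α Q + (Λ - w Q))`. For `‖ζ‖ ≤ 1` one has `Re (w / (w - ζ)) ≥ 1 / (1 + ‖ζ‖)`; summing,
and using `(1 - ∏ tⱼ) / (1 + ∏ tⱼ) ≤ ∑ (1 - tⱼ) / (1 + tⱼ)` on `[0, 1]` together with
`|a₀| / |aₙ| = ∏ ‖zⱼ‖`, gives `2 Re (w Q) ≥ Λ + γₘ (|aₙ| - |a₀|) / (|aₙ| + |a₀|)`. In particular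
`Re (w Q) ≥ Λ / 2`, so `‖Λ - w Q‖ ≤ ‖Q‖` and `‖D(w)‖ ≥ (‖α‖ - 1) ‖Q‖ ‖P(w)‖`. Evaluating at a
point where `‖P‖` is maximal on the circle finishes the proof.
-/

open Complex Polynomial Finset

lemma one_sub_mul_div_one_add_mul_le {a b : ℝ} (ha₀ : 0 ≤ a) (ha₁ : a ≤ 1) (hb₀ : 0 ≤ b)
    (hb₁ : b ≤ 1) : (1 - a * b) / (1 + a * b) ≤ (1 - a) / (1 + a) + (1 - b) / (1 + b) := by
  have hab : a * b ≤ 1 := mul_le_one₀ ha₁ hb₀ hb₁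
  rw [div_add_div _ _ (by positivity) (by positivity), div_le_div_iff₀ (by positivity)
    (by positivity)]
  nlinarith [mul_nonneg (mul_nonneg (sub_nonneg.2 hab) (sub_nonneg.2 ha₁)) (sub_nonneg.2 hb₁)]

lemma one_sub_prod_div_one_add_prod_le_sum {ι : Type*} (s : Finset ι) {t : ι → ℝ}
    (h₀ : ∀ j ∈ s, 0 ≤ t j) (h₁ : ∀ j ∈ s, t j ≤ 1) :
    (1 - ∏ j ∈ s, t j) / (1 + ∏ j ∈ s, t j) ≤ ∑ j ∈ s, (1 - t j) / (1 + t j) := by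
  induction s using Finset.cons_induction with
  | empty => simp
  | cons a s _ ih =>
    simp only [mem_cons, forall_eq_or_imp] at h₀ h₁
    rw [prod_cons, sum_cons]
    calc (1 - t a * ∏ j ∈ s, t j) / (1 + t a * ∏ j ∈ s, t j)
        ≤ (1 - t a) / (1 + t a) + (1 - ∏ j ∈ s, t j) / (1 + ∏ j ∈ s, t j) :=
          one_sub_mul_div_one_add_mul_le h₀.1 h₁.1 (prod_nonneg h₀.2) (prod_le_one h₀.2 h₁.2)
      _ ≤ (1 - t a) / (1 + t a) + ∑ j ∈ s, (1 - t j) / (1 + t j) := by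
          gcongr
          exact ih h₀.2 h₁.2

lemma inv_one_add_norm_le_re_div_sub {w ζ : ℂ} (hw : ‖w‖ = 1) (hζ : ‖ζ‖ ≤ 1) (hne : w ≠ ζ) :
    (1 + ‖ζ‖)⁻¹ ≤ (w / (w - ζ)).re := by
  -- With `u = ζ / w` the claim reads `Re (1 - u)⁻¹ ≥ (1 + ‖u‖)⁻¹`,
  -- i.e. `(1 - ‖u‖) (‖u‖ + Re u) ≥ 0`.
  have hw₀ : w ≠ 0 := norm_ne_zero_iff.1 (by rw [hw]; exact one_ne_zero)
  set u := ζ / w with hu_def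
  have hu : ‖u‖ = ‖ζ‖ := by rw [norm_div, hw, div_one]
  have hu1 : 1 - u ≠ 0 := by
    rw [sub_ne_zero, ne_comm, hu_def, ne_eq, div_eq_one_iff_eq hw₀]; exact hne.symm
  have hdiv : w / (w - ζ) = (1 - u)⁻¹ := by
    rw [hu_def, one_sub_div hw₀, inv_div]
  have hsq : u.re ^ 2 + u.im ^ 2 = ‖ζ‖ ^ 2 := by
    rw [← hu, Complex.sq_norm, normSq_apply]; ring
  have hre := abs_re_le_norm u
  rw [hu, abs_le] at hre
  have hpos := normSq_pos.2 hu1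
  rw [hdiv, inv_re, ← one_div, div_le_div_iff₀ (by positivity) hpos]
  rw [normSq_apply] at hpos ⊢
  simp only [sub_re, sub_im, one_re, one_im] at hpos ⊢
  nlinarith [mul_nonneg (sub_nonneg.2 hζ) (neg_le_iff_add_nonneg.1 hre.1)]

lemma norm_ofReal_sub_le_norm {Λ : ℝ} {p : ℂ} (hΛ : 0 ≤ Λ) (hp : Λ ≤ 2 * p.re) :
    ‖(Λ : ℂ) - p‖ ≤ ‖p‖ := by
  rw [← sq_le_sq₀ (norm_nonneg _) (norm_nonneg _), Complex.sq_norm, Complex.sq_norm, normSq_apply,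
    normSq_apply]
  simp only [sub_re, sub_im, ofReal_re, ofReal_im]
  nlinarith

lemma sub_one_mul_norm_le_norm_add_sub_mul {Λ : ℝ} {α w q : ℂ} (hw : ‖w‖ = 1) (hΛ : 0 ≤ Λ)
    (hre : Λ ≤ 2 * (w * q).re) : (‖α‖ - 1) * ‖q‖ ≤ ‖(Λ : ℂ) + (α - w) * q‖ := by
  have hwq : ‖w * q‖ = ‖q‖ := by rw [norm_mul, hw, one_mul]
  have := norm_sub_le ((Λ : ℂ) + (α - w) * q) ((Λ : ℂ) - w * q)
  rw [show (Λ : ℂ) + (α - w) * q - ((Λ : ℂ) - w * q) = α * q by ring, norm_mul] at this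
  linarith [norm_ofReal_sub_le_norm hΛ hre]

lemma re_mul_sum_div_sub_ge {ι : Type*} [Fintype ι] {w : ℂ} {z : ι → ℂ} {γ : ι → ℝ} {γm : ℝ}
    (hw : ‖w‖ = 1) (hz : ∀ j, ‖z j‖ ≤ 1) (hwz : ∀ j, w ≠ z j) (hγm₀ : 0 ≤ γm)
    (hγm : ∀ j, γm ≤ γ j) :
    (∑ j, γ j) + γm * ((1 - ∏ j, ‖z j‖) / (1 + ∏ j, ‖z j‖)) ≤
      2 * (w * ∑ j, (γ j : ℂ) / (w - z j)).re := by
  have hterm : ∀ j, γ j + γm * ((1 - ‖z j‖) / (1 + ‖z j‖)) ≤ 2 * (γ j * (w / (w - z j)).re) := by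
    intro j
    have ht := norm_nonneg (z j)
    have hf : 0 ≤ (1 - ‖z j‖) / (1 + ‖z j‖) := div_nonneg (by linarith [hz j]) (by positivity)
    calc γ j + γm * ((1 - ‖z j‖) / (1 + ‖z j‖))
        ≤ γ j + γ j * ((1 - ‖z j‖) / (1 + ‖z j‖)) := by gcongr; exact hγm j
      _ = 2 * (γ j * (1 + ‖z j‖)⁻¹) := by field_simp; ring
      _ ≤ 2 * (γ j * (w / (w - z j)).re) := by
          gcongr
          · exact hγm₀.trans (hγm j)
          · exact inv_one_add_norm_le_re_div_sub hw (hz j) (hwz j)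
  have hsum : (w * ∑ j, (γ j : ℂ) / (w - z j)).re = ∑ j, γ j * (w / (w - z j)).re := by
    simp only [mul_sum, mul_div_left_comm w, re_sum, re_ofReal_mul]
  have hprod := one_sub_prod_div_one_add_prod_le_sum univ (fun j _ => norm_nonneg (z j))
    (fun j _ => hz j)
  calc (∑ j, γ j) + γm * ((1 - ∏ j, ‖z j‖) / (1 + ∏ j, ‖z j‖))
      ≤ ∑ j, (γ j + γm * ((1 - ‖z j‖) / (1 + ‖z j‖))) := by
        rw [sum_add_distrib, ← mul_sum]; gcongr
    _ ≤ 2 * (w * ∑ j, (γ j : ℂ) / (w - z j)).re := by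
        rw [hsum, mul_sum]; exact sum_le_sum fun j _ => hterm j

lemma sub_one_mul_le_norm_add_sub_mul_sum_div_sub {ι : Type*} [Fintype ι] {α w : ℂ}
    {z : ι → ℂ} {γ : ι → ℝ} {γm : ℝ} (hα : 1 ≤ ‖α‖) (hw : ‖w‖ = 1) (hz : ∀ j, ‖z j‖ ≤ 1)
    (hwz : ∀ j, w ≠ z j) (hγm₀ : 0 ≤ γm) (hγm : ∀ j, γm ≤ γ j) :
    (‖α‖ - 1) / 2 * ((∑ j, γ j) + γm * ((1 - ∏ j, ‖z j‖) / (1 + ∏ j, ‖z j‖))) ≤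
      ‖((∑ j, γ j : ℝ) : ℂ) + (α - w) * ∑ j, (γ j : ℂ) / (w - z j)‖ := by
  set Q := ∑ j, (γ j : ℂ) / (w - z j)
  have hΛ : 0 ≤ ∑ j, γ j := sum_nonneg fun j _ => hγm₀.trans (hγm j)
  have hR : 0 ≤ (1 - ∏ j, ‖z j‖) / (1 + ∏ j, ‖z j‖) := by
    have := prod_le_one (s := univ) (fun j _ => norm_nonneg (z j)) fun j _ => hz j
    exact div_nonneg (by linarith) (by positivity)
  have hre := re_mul_sum_div_sub_ge hw hz hwz hγm₀ hγm
  have hQ : (w * Q).re ≤ ‖Q‖ := by simpa [norm_mul, hw] using re_le_norm (w * Q)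
  calc (‖α‖ - 1) / 2 * ((∑ j, γ j) + γm * ((1 - ∏ j, ‖z j‖) / (1 + ∏ j, ‖z j‖)))
      ≤ (‖α‖ - 1) * ‖Q‖ := by nlinarith
    _ ≤ _ := sub_one_mul_norm_le_norm_add_sub_mul hw hΛ (by nlinarith)

lemma eval_C_mul_prod_X_sub_C {R ι : Type*} [CommRing R] [Fintype ι] (c : R) (z : ι → R) (w : R) :
    (C c * ∏ j, (X - C (z j))).eval w = c * ∏ j, (w - z j) := by
  simp [eval_prod]

lemma eval_C_mul_sum_C_mul_prod_erase {K ι : Type*} [Field K] [Fintype ι] [DecidableEq ι]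
    (c : K) (z γ : ι → K) {w : K} (hwz : ∀ j, w ≠ z j) :
    (C c * ∑ j, C (γ j) * ∏ i ∈ univ.erase j, (X - C (z i))).eval w =
      (C c * ∏ j, (X - C (z j))).eval w * ∑ j, γ j / (w - z j) := by
  simp only [eval_mul, eval_C, eval_finsetSum, eval_prod, eval_sub, eval_X, mul_sum]
  refine sum_congr rfl fun j _ => ?_
  rw [← mul_prod_erase univ (fun i => w - z i) (mem_univ j)]
  field_simp [sub_ne_zero.2 (hwz j)]

lemma norm_coeff_zero_C_mul_prod_X_sub_C {ι : Type*} [Fintype ι] (c : ℂ) (z : ι → ℂ) :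
    ‖(C c * ∏ j, (X - C (z j))).coeff 0‖ = ‖c‖ * ∏ j, ‖z j‖ := by
  simp [coeff_zero_eq_eval_zero, eval_prod, norm_prod]

lemma mul_iSup_le_iSup_of_forall_mul_le {X : Type*} [TopologicalSpace X] [CompactSpace X]
    [Nonempty X] {f g : X → ℝ} (hf : Continuous f) (hg : Continuous g) {K : ℝ}
    (h : ∀ x, K * f x ≤ g x) : K * ⨆ x, f x ≤ ⨆ x, g x := by
  obtain ⟨x₀, -, hx₀⟩ := isCompact_univ.exists_isMaxOn Set.univ_nonempty hf.continuousOn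
  have hsup : ⨆ x, f x = f x₀ :=
    le_antisymm (ciSup_le fun x => hx₀ (Set.mem_univ x)) (le_ciSup (isCompact_range hf).bddAbove x₀)
  rw [hsup]
  exact (h x₀).trans (le_ciSup (isCompact_range hg).bddAbove x₀)

theorem stmt_8_general (n : ℕ) (c : ℂ) (hc : c ≠ 0) (z : Fin n → ℂ)
    (hz : ∀ j, ‖z j‖ ≤ 1)
    (γ : Fin n → ℝ) (hγ : ∀ j, 0 ≤ γ j)
    (γm : ℝ) (hγm : IsLeast (Set.range γ) γm)
    (P : Polynomial ℂ) (hP : P = Polynomial.C c * ∏ j, (Polynomial.X - Polynomial.C (z j)))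
    (Pγ : Polynomial ℂ)
    (hPγ : Pγ = Polynomial.C c * ∑ j, Polynomial.C (γ j : ℂ) *
      ∏ i ∈ Finset.univ.erase j, (Polynomial.X - Polynomial.C (z i)))
    (α : ℂ) (hα : 1 ≤ ‖α‖)
    (D : Polynomial ℂ)
    (hD : D = Polynomial.C ((∑ j, γ j : ℝ) : ℂ) * P + (Polynomial.C α - Polynomial.X) * Pγ) :
    (‖α‖ - 1) / 2 *
        ((∑ j, γ j) + γm * ((‖c‖ - ‖P.coeff 0‖) / (‖c‖ + ‖P.coeff 0‖))) *
        (⨆ w : Metric.sphere (0 : ℂ) 1, ‖P.eval (w : ℂ)‖) ≤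
      ⨆ w : Metric.sphere (0 : ℂ) 1, ‖D.eval (w : ℂ)‖ := by
  obtain ⟨⟨j₀, rfl⟩, hγm_le⟩ := hγm
  have hratio : (‖c‖ - ‖P.coeff 0‖) / (‖c‖ + ‖P.coeff 0‖) =
      (1 - ∏ j, ‖z j‖) / (1 + ∏ j, ‖z j‖) := by
    rw [hP, norm_coeff_zero_C_mul_prod_X_sub_C, ← mul_one_sub, ← mul_one_add,
      mul_div_mul_left _ _ (norm_ne_zero_iff.2 hc)]
  rw [hratio]
  refine mul_iSup_le_iSup_of_forall_mul_le (P.continuous.comp continuous_subtype_val).norm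
    (D.continuous.comp continuous_subtype_val).norm fun ⟨w, hw⟩ => ?_
  rw [mem_sphere_zero_iff_norm] at hw
  dsimp only [Function.comp_apply]
  by_cases hPw : P.eval w = 0
  · simp [hPw]
  have hwz : ∀ j, w ≠ z j := fun j hj => hPw <| by
    rw [hP, eval_C_mul_prod_X_sub_C, prod_eq_zero (mem_univ j) (sub_eq_zero.2 hj), mul_zero]
  have hDw : D.eval w =
      P.eval w * ((∑ j, γ j : ℝ) + (α - w) * ∑ j, (γ j : ℂ) / (w - z j)) := by
    rw [hD, hPγ, eval_add, eval_mul, eval_mul, eval_C_mul_sum_C_mul_prod_erase _ _ _ hwz, ← hP]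
    simp only [eval_C, eval_sub, eval_X]
    ring
  rw [hDw, norm_mul, mul_comm ‖P.eval w‖]
  gcongr
  exact sub_one_mul_le_norm_add_sub_mul_sum_div_sub hα hw hz hwz (hγ j₀) fun j => hγm_le ⟨j, rfl⟩

theorem stmt_8 (n : ℕ) (hn : 0 < n) (c : ℂ) (hc : c ≠ 0) (z : Fin n → ℂ)
    (hz : ∀ j, ‖z j‖ ≤ 1)
    (γ : Fin n → ℝ) (hγ : ∀ j, 0 ≤ γ j) (hγ0 : ∃ j, γ j ≠ 0)
    (γm : ℝ) (hγm : IsLeast (Set.range γ) γm)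
    (P : Polynomial ℂ) (hP : P = Polynomial.C c * ∏ j, (Polynomial.X - Polynomial.C (z j)))
    (Pγ : Polynomial ℂ)
    (hPγ : Pγ = Polynomial.C c * ∑ j, Polynomial.C (γ j : ℂ) *
      ∏ i ∈ Finset.univ.erase j, (Polynomial.X - Polynomial.C (z i)))
    (α : ℂ) (hα : 1 ≤ ‖α‖)
    (D : Polynomial ℂ)
    (hD : D = Polynomial.C ((∑ j, γ j : ℝ) : ℂ) * P + (Polynomial.C α - Polynomial.X) * Pγ) :
    (‖α‖ - 1) / 2 *
        ((∑ j, γ j) + γm * ((‖c‖ - ‖P.coeff 0‖) / (‖c‖ + ‖P.coeff 0‖))) *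
        (⨆ w : Metric.sphere (0 : ℂ) 1, ‖P.eval (w : ℂ)‖) ≤
      ⨆ w : Metric.sphere (0 : ℂ) 1, ‖D.eval (w : ℂ)‖ :=
  stmt_8_general n c hc z hz γ hγ γm hγm P hP Pγ hPγ α hα D hD
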